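/- Let r ≥ 2 and a_1, …, a_r be integers ≥ 2, and let R := ℂ[x_1, …, x_r]/(x_i x_j for i ≠ j; a_i x_i^{a_i} − a_j x_j^{a_j} for i ≠ j). Define a symmetric bilinear form η on R by, on the basis {1, x_i^j (1 ≤ j ≤ a_i−1), w := a_1 x_1^{a_1}}: η(1, w) = 1, η(x_i^{j}, x_i^{a_i − j}) = 1/a_i, and all other pairings of basis elements zero. Then η is nondegenerate and satisfies the Frobenius property η(u·v, z) = η(u, v·z) for all u, v, z ∈ R. -/

import Mathlib

/-!
Since `x_i x_k = 0` for `i ≠ k`, `x_i^{a_i} = w / a_i` and `w x_i = 0` (write `w = a_k x_k^{a_k}`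
with `k ≠ i`), the ring is spanned by `1`, `w` and the `x_i^j` with `0 < j < a_i`. By the table
of `η`, the elements `w`, `1` and `a_i x_i^{a_i - j}` form a dual family to these, so `η` is
nondegenerate. Checking `η(u v, 1) = η(u, v)` on pairs of spanning elements gives it everywhere
by bilinearity, and then `η(u v, z) = η(u v z, 1) = η(u, v z)`.
-/

open MvPolynomial

/-- The defining ideal of the degenerate quantum cohomology ring of `ℙ¹_{A}`. -/
noncomputable def relIdeal (r : ℕ) (a : Fin r → ℕ) : Ideal (MvPolynomial (Fin r) ℂ) :=
  Ideal.span ({p | ∃ i j : Fin r, i ≠ j ∧ p = X i * X j} ∪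
    {p | ∃ i j : Fin r, i ≠ j ∧
      p = C (a i : ℂ) * X i ^ (a i) - C (a j : ℂ) * X j ^ (a j)})

namespace LinearMap

variable {R M ι : Type*} [CommSemiring R] [AddCommMonoid M] [Module R M]

theorem eq_sum_smul_of_biorthogonal [Fintype ι] (η : M →ₗ[R] M →ₗ[R] R) {e e' : ι → M}
    (he : Submodule.span R (Set.range e) = ⊤) (hdiag : ∀ k, η (e k) (e' k) = 1)
    (hoff : ∀ k l, k ≠ l → η (e k) (e' l) = 0) (u : M) :
    u = ∑ k, η u (e' k) • e k := by
  have hid : LinearMap.id = ∑ k, (η.flip (e' k)).smulRight (e k) := by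
    refine ext_on_range he fun l => ?_
    rw [sum_apply, Finset.sum_eq_single l (fun k _ hkl => ?_) (by simp)]
    · simp [hdiag]
    · simp [hoff l k hkl.symm]
  simpa using LinearMap.congr_fun hid u

theorem separatingLeft_of_biorthogonal [Finite ι] (η : M →ₗ[R] M →ₗ[R] R) {e e' : ι → M}
    (he : Submodule.span R (Set.range e) = ⊤) (hdiag : ∀ k, η (e k) (e' k) = 1)
    (hoff : ∀ k l, k ≠ l → η (e k) (e' l) = 0) : η.SeparatingLeft := by
  have := Fintype.ofFinite ι
  intro u hu
  simpa [hu] using eq_sum_smul_of_biorthogonal η he hdiag hoff u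

end LinearMap

namespace Orbifold

variable {K A ι : Type*} [Field K] [CommRing A] [Algebra K A] {a : ι → ℕ} {x : ι → A} {w : A}

theorem pow_mul_pow_eq_zero (hx : ∀ i j, i ≠ j → x i * x j = 0) {i k : ι} (hik : i ≠ k)
    {j l : ℕ} (hj : j ≠ 0) (hl : l ≠ 0) : x i ^ j * x k ^ l = 0 := by
  obtain ⟨j, rfl⟩ := Nat.exists_eq_succ_of_ne_zero hj
  obtain ⟨l, rfl⟩ := Nat.exists_eq_succ_of_ne_zero hl
  rw [pow_succ, pow_succ, mul_mul_mul_comm, hx i k hik, mul_zero]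

variable (K a x w) in
structure Relations : Prop where
  mul_of_ne : ∀ i j, i ≠ j → x i * x j = 0
  smul_pow : ∀ i, (a i : K) • x i ^ a i = w
  cast_ne_zero : ∀ i, (a i : K) ≠ 0

namespace Relations

theorem pow_eq_inv_smul (hR : Relations K a x w) (i : ι) : x i ^ a i = (a i : K)⁻¹ • w := by
  rw [← hR.smul_pow i, inv_smul_smul₀ (hR.cast_ne_zero i)]

theorem ne_zero (hR : Relations K a x w) (i : ι) : a i ≠ 0 :=
  fun h => hR.cast_ne_zero i (by rw [h, Nat.cast_zero])

variable [Nontrivial ι]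

theorem w_mul_pow (hR : Relations K a x w) (i : ι) {l : ℕ} (hl : l ≠ 0) : w * x i ^ l = 0 := by
  obtain ⟨j, hji⟩ := exists_ne i
  rw [← hR.smul_pow j, smul_mul_assoc, pow_mul_pow_eq_zero hR.mul_of_ne hji (hR.ne_zero j) hl,
    smul_zero]

theorem w_mul_w (hR : Relations K a x w) : w * w = 0 := by
  obtain ⟨i⟩ : Nonempty ι := inferInstance
  nth_rw 2 [← hR.smul_pow i]
  rw [mul_smul_comm, hR.w_mul_pow i (hR.ne_zero i), smul_zero]

theorem pow_eq_zero_of_lt (hR : Relations K a x w) {i : ι} {m : ℕ} (hm : a i < m) :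
    x i ^ m = 0 := by
  rw [← Nat.add_sub_of_le hm.le, pow_add, hR.pow_eq_inv_smul, smul_mul_assoc,
    hR.w_mul_pow i (by omega), smul_zero]

end Relations

variable (a x w) in
def basis : Option (Option (Σ i, Fin (a i - 1))) → A
  | none => 1
  | some none => w
  | some (some ⟨i, m⟩) => x i ^ ((m : ℕ) + 1)

variable (K a x w) in
def dualBasis : Option (Option (Σ i, Fin (a i - 1))) → A
  | none => w
  | some none => 1
  | some (some ⟨i, m⟩) => (a i : K) • x i ^ (a i - ((m : ℕ) + 1))

namespace Relations

variable [Nontrivial ι]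

theorem pow_mem_span_basis (hR : Relations K a x w) (i : ι) (j : ℕ) :
    x i ^ j ∈ Submodule.span K (Set.range (basis a x w)) := by
  rcases Nat.lt_trichotomy j (a i) with hj | rfl | hj
  · rcases Nat.eq_zero_or_pos j with rfl | hj0
    · exact Submodule.subset_span ⟨none, (pow_zero _).symm⟩
    · obtain ⟨m, rfl⟩ := Nat.exists_eq_add_of_le' hj0
      exact Submodule.subset_span ⟨some (some ⟨i, ⟨m, by omega⟩⟩), rfl⟩
  · rw [hR.pow_eq_inv_smul]
    exact Submodule.smul_mem _ _ (Submodule.subset_span ⟨some none, rfl⟩)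
  · rw [hR.pow_eq_zero_of_lt hj]
    exact Submodule.zero_mem _

theorem span_basis (hR : Relations K a x w) (hgen : Algebra.adjoin K (Set.range x) = ⊤) :
    Submodule.span K (Set.range (basis a x w)) = ⊤ := by
  set N := Submodule.span K (Set.range (basis a x w))
  have hmul : ∀ i, N.map (LinearMap.mulLeft K (x i)) ≤ N := by
    intro i
    rw [Submodule.map_span_le]
    rintro _ ⟨_ | _ | ⟨k, m⟩, rfl⟩
    · simpa [basis] using hR.pow_mem_span_basis i 1
    · show x i * w ∈ N
      rw [mul_comm, ← pow_one (x i), hR.w_mul_pow i one_ne_zero]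
      exact N.zero_mem
    · show x i * x k ^ ((m : ℕ) + 1) ∈ N
      by_cases hik : i = k
      · rw [hik, ← pow_succ']
        exact hR.pow_mem_span_basis k _
      · rw [← pow_one (x i), pow_mul_pow_eq_zero hR.mul_of_ne hik one_ne_zero (m : ℕ).succ_ne_zero]
        exact N.zero_mem
  rw [eq_top_iff, ← Algebra.top_toSubmodule, ← hgen, Algebra.adjoin_eq_span, Submodule.span_le]
  intro y hy
  induction hy using Submonoid.closure_induction_left with
  | one => exact Submodule.subset_span ⟨none, rfl⟩
  | mul_left _ hxi z _ ih =>
    obtain ⟨i, rfl⟩ := hxi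
    exact hmul i (Submodule.mem_map_of_mem ih)

end Relations

structure IsPairing [DecidableEq ι] (η : A →ₗ[K] A →ₗ[K] K) (a : ι → ℕ) (x : ι → A) (w : A) :
    Prop where
  one_one : η 1 1 = 0
  one_w : η 1 w = 1
  w_one : η w 1 = 1
  w_w : η w w = 0
  pow_pow : ∀ i₁ i₂ : ι, ∀ j₁ j₂ : ℕ, 1 ≤ j₁ → j₁ ≤ a i₁ - 1 → 1 ≤ j₂ → j₂ ≤ a i₂ - 1 →
    η (x i₁ ^ j₁) (x i₂ ^ j₂) = if i₁ = i₂ ∧ j₂ = a i₁ - j₁ then 1 / (a i₁ : K) else 0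
  one_pow : ∀ i j, 1 ≤ j → j ≤ a i - 1 → η 1 (x i ^ j) = 0
  pow_one : ∀ i j, 1 ≤ j → j ≤ a i - 1 → η (x i ^ j) 1 = 0
  pow_w : ∀ i j, 1 ≤ j → j ≤ a i - 1 → η (x i ^ j) w = 0
  w_pow : ∀ i j, 1 ≤ j → j ≤ a i - 1 → η w (x i ^ j) = 0

namespace IsPairing

variable [DecidableEq ι] {η : A →ₗ[K] A →ₗ[K] K}

theorem basis_dualBasis_self (hη : IsPairing η a x w) (ha : ∀ i, (a i : K) ≠ 0) (k) :
    η (basis a x w k) (dualBasis K a x w k) = 1 := by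
  rcases k with _ | _ | ⟨i, m⟩
  · exact hη.one_w
  · exact hη.w_one
  · simp only [basis, dualBasis, map_smul, smul_eq_mul]
    rw [hη.pow_pow i i _ _ (by omega) (by omega) (by omega) (by omega), if_pos ⟨rfl, rfl⟩,
      mul_one_div_cancel (ha i)]

theorem basis_dualBasis_of_ne (hη : IsPairing η a x w) {k l} (hkl : k ≠ l) :
    η (basis a x w k) (dualBasis K a x w l) = 0 := by
  rcases k with _ | _ | ⟨i, m⟩ <;> rcases l with _ | _ | ⟨k, n⟩ <;>
    simp only [basis, dualBasis, map_smul, smul_eq_mul, mul_eq_zero] <;>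
    simp only [ne_eq, not_true_eq_false] at hkl
  · exact hη.one_one
  · exact .inr (hη.one_pow _ _ (by omega) (by omega))
  · exact hη.w_w
  · exact .inr (hη.w_pow _ _ (by omega) (by omega))
  · exact hη.pow_w _ _ (by omega) (by omega)
  · exact hη.pow_one _ _ (by omega) (by omega)
  · refine .inr ((hη.pow_pow _ _ _ _ (by omega) (by omega) (by omega) (by omega)).trans
      (if_neg ?_))
    rintro ⟨rfl, h⟩
    exact hkl (by rw [show m = n from Fin.ext (by omega)])

variable [Nontrivial ι]

theorem apply_pow_one (hη : IsPairing η a x w) (hR : Relations K a x w) (i : ι) {j : ℕ}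
    (hj : 1 ≤ j) : η (x i ^ j) 1 = if j = a i then 1 / (a i : K) else 0 := by
  rcases Nat.lt_trichotomy j (a i) with hlt | rfl | hgt
  · rw [hη.pow_one i j hj (by omega), if_neg hlt.ne]
  · rw [hR.pow_eq_inv_smul, map_smul, LinearMap.smul_apply, hη.w_one, smul_eq_mul, mul_one,
      if_pos rfl, one_div]
  · rw [hR.pow_eq_zero_of_lt hgt, map_zero, LinearMap.zero_apply, if_neg hgt.ne']

theorem apply_mul_one (hη : IsPairing η a x w) (hR : Relations K a x w)
    (hgen : Algebra.adjoin K (Set.range x) = ⊤) (u v : A) : η (u * v) 1 = η u v := by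
  have hspan := hR.span_basis hgen
  suffices (LinearMap.mul K A).compr₂ (η.flip 1) = η from LinearMap.congr_fun₂ this u v
  refine LinearMap.ext_on_range hspan fun k => LinearMap.ext_on_range hspan fun l => ?_
  simp only [LinearMap.compr₂_apply, LinearMap.mul_apply', LinearMap.flip_apply]
  rcases k with _ | _ | ⟨i, m⟩ <;> rcases l with _ | _ | ⟨k, n⟩ <;>
    simp only [basis, _root_.mul_one, _root_.one_mul]
  · rw [hη.w_one, hη.one_w]
  · rw [hη.pow_one _ _ (by omega) (by omega), hη.one_pow _ _ (by omega) (by omega)]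
  · rw [hR.w_mul_w, map_zero, LinearMap.zero_apply, hη.w_w]
  · rw [hR.w_mul_pow _ (by omega), map_zero, LinearMap.zero_apply,
      hη.w_pow _ _ (by omega) (by omega)]
  · rw [mul_comm, hR.w_mul_pow _ (by omega), map_zero, LinearMap.zero_apply,
      hη.pow_w _ _ (by omega) (by omega)]
  · rw [hη.pow_pow _ _ _ _ (by omega) (by omega) (by omega) (by omega)]
    by_cases hik : i = k
    · subst hik
      rw [← pow_add, hη.apply_pow_one hR _ (by omega)]
      simp only [true_and]
      split_ifs <;> first | rfl | omega
    · rw [pow_mul_pow_eq_zero hR.mul_of_ne hik (by omega) (by omega), map_zero,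
        LinearMap.zero_apply, if_neg fun h => hik h.1]

theorem frobenius (hη : IsPairing η a x w) (hR : Relations K a x w)
    (hgen : Algebra.adjoin K (Set.range x) = ⊤) (u v z : A) : η (u * v) z = η u (v * z) := by
  rw [← hη.apply_mul_one hR hgen, ← hη.apply_mul_one hR hgen u, mul_assoc]

theorem separatingLeft [Finite ι] (hη : IsPairing η a x w) (hR : Relations K a x w)
    (hgen : Algebra.adjoin K (Set.range x) = ⊤) : η.SeparatingLeft :=
  have := Fintype.ofFinite ι
  η.separatingLeft_of_biorthogonal (hR.span_basis hgen) (hη.basis_dualBasis_self hR.cast_ne_zero)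
    fun _ _ => hη.basis_dualBasis_of_ne

end IsPairing

end Orbifold

theorem MvPolynomial.adjoin_range_mk_X {R σ : Type*} [CommRing R] (I : Ideal (MvPolynomial σ R)) :
    Algebra.adjoin R (Set.range fun i => Ideal.Quotient.mk I (X i)) = ⊤ := by
  rw [← Ideal.Quotient.mkₐ_eq_mk R, Set.range_comp', Algebra.adjoin_image, adjoin_range_X,
    Algebra.map_top, AlgHom.range_eq_top]
  exact Ideal.Quotient.mkₐ_surjective R I

namespace relIdeal

variable {r : ℕ} {a : Fin r → ℕ}

theorem mk_X_mul_mk_X {i j : Fin r} (hij : i ≠ j) :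
    Ideal.Quotient.mk (relIdeal r a) (X i) * Ideal.Quotient.mk (relIdeal r a) (X j) = 0 := by
  rw [← map_mul, Ideal.Quotient.eq_zero_iff_mem]
  exact Ideal.subset_span (.inl ⟨i, j, hij, rfl⟩)

theorem smul_mk_X_pow (i j : Fin r) :
    (a i : ℂ) • Ideal.Quotient.mk (relIdeal r a) (X i) ^ a i =
      Ideal.Quotient.mk (relIdeal r a) (C (a j : ℂ) * X j ^ a j) := by
  rw [← map_pow, ← Ideal.Quotient.mkₐ_eq_mk ℂ, ← map_smul, smul_eq_C_mul]
  rcases eq_or_ne i j with rfl | hij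
  · rfl
  · exact Ideal.Quotient.eq.mpr (Ideal.subset_span (.inr ⟨i, j, hij, rfl⟩))

end relIdeal

/-- The orbifold Poincaré pairing is nondegenerate and Frobenius. Here `η` is the
symmetric bilinear form on `R = ℂ[x]/(...)` determined on the basis
`1, x_i^j (1 ≤ j ≤ a_i - 1), w = a_1 x_1^{a_1}` by `η(1,w) = 1`,
`η(x_i^j, x_i^{a_i - j}) = 1/a_i`, all other pairings of basis elements zero. -/
theorem pairing_nondegenerate_frobenius (r : ℕ) (hr : 2 ≤ r) (a : Fin r → ℕ)
    (ha : ∀ k, 2 ≤ a k)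
    (η : (MvPolynomial (Fin r) ℂ ⧸ relIdeal r a) →ₗ[ℂ]
      (MvPolynomial (Fin r) ℂ ⧸ relIdeal r a) →ₗ[ℂ] ℂ)
    (x : Fin r → MvPolynomial (Fin r) ℂ ⧸ relIdeal r a)
    (hx : ∀ i, x i = Ideal.Quotient.mk (relIdeal r a) (X i))
    (w : MvPolynomial (Fin r) ℂ ⧸ relIdeal r a)
    (hw : w = Ideal.Quotient.mk (relIdeal r a)
      (C (a ⟨0, by omega⟩ : ℂ) * X (⟨0, by omega⟩ : Fin r) ^ (a ⟨0, by omega⟩)))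
    (h1w : η 1 w = 1) (hw1 : η w 1 = 1)
    (hxx : ∀ i₁ i₂ : Fin r, ∀ j₁ j₂ : ℕ, 1 ≤ j₁ → j₁ ≤ a i₁ - 1 →
      1 ≤ j₂ → j₂ ≤ a i₂ - 1 →
      η (x i₁ ^ j₁) (x i₂ ^ j₂) =
        if i₁ = i₂ ∧ j₂ = a i₁ - j₁ then 1 / (a i₁ : ℂ) else 0)
    (h11 : η 1 1 = 0) (hww : η w w = 0)
    (h1x : ∀ i : Fin r, ∀ j : ℕ, 1 ≤ j → j ≤ a i - 1 → η 1 (x i ^ j) = 0)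
    (hx1 : ∀ i : Fin r, ∀ j : ℕ, 1 ≤ j → j ≤ a i - 1 → η (x i ^ j) 1 = 0)
    (hxw : ∀ i : Fin r, ∀ j : ℕ, 1 ≤ j → j ≤ a i - 1 → η (x i ^ j) w = 0)
    (hwx : ∀ i : Fin r, ∀ j : ℕ, 1 ≤ j → j ≤ a i - 1 → η w (x i ^ j) = 0) :
    (∀ u, (∀ v, η u v = 0) → u = 0) ∧
    (∀ u v z, η (u * v) z = η u (v * z)) := by
  have : Nontrivial (Fin r) := Fin.nontrivial_iff_two_le.mpr hr
  have hη : Orbifold.IsPairing η a x w := ⟨h11, h1w, hw1, hww, hxx, h1x, hx1, hxw, hwx⟩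
  have hR : Orbifold.Relations ℂ a x w :=
    { mul_of_ne := fun i j hij => by rw [hx, hx]; exact relIdeal.mk_X_mul_mk_X hij
      smul_pow := fun i => by rw [hx, hw]; exact relIdeal.smul_mk_X_pow i _
      cast_ne_zero := fun i => Nat.cast_ne_zero.mpr (by have := ha i; omega) }
  have hgen : Algebra.adjoin ℂ (Set.range x) = ⊤ := by
    rw [funext hx]; exact MvPolynomial.adjoin_range_mk_X _
  exact ⟨hη.separatingLeft hR hgen, hη.frobenius hR hgen⟩
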